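/- Let G be a finite simple graph, let A_1, …, A_L be a partition of V(G), and let S be a nonempty finite set of automorphisms of G that is A-balancing. Let p ≥ 0 be an integer. If x ∈ LS+^p(G), then the vector x' := ∑_{ℓ=1}^{L} ( (1/|A_ℓ|) ∑_{i ∈ A_ℓ} x_i ) · χ_{A_ℓ}, where χ_{A_ℓ} is the 0/1 indicator vector of A_ℓ, also belongs to LS+^p(G). -/

import Mathlib

open Finset

noncomputable section

/-- `cone(P)`: the homogenization of `P`, indexed by `Option V` with `none` playing
the role of the `0` coordinate. -/
def lsCone {V : Type*} (P : Set (V → ℝ)) : Set (Option V → ℝ) :=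
  {y | ∃ (lam : ℝ) (x : V → ℝ), 0 ≤ lam ∧ x ∈ P ∧
    y = fun o => o.elim lam (fun v => lam * x v)}

/-- The lift `LŜ₊(P)`: symmetric PSD matrices `Y` indexed by `Option V`
with `Y e₀ = diag Y` and all columns conditions. -/
def lsLift {V : Type*} [Fintype V] [DecidableEq V] (P : Set (V → ℝ)) :
    Set (Matrix (Option V) (Option V) ℝ) :=
  {Y | Y.PosSemidef ∧ Y.mulVec (Pi.single none 1) = Matrix.diag Y ∧
      ∀ v : V, Y.mulVec (Pi.single (some v) 1) ∈ lsCone P ∧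
        Y.mulVec (Pi.single none 1 - Pi.single (some v) 1) ∈ lsCone P}

/-- The Lovász–Schrijver operator `LS₊`. -/
def lsPlus {V : Type*} [Fintype V] [DecidableEq V] (P : Set (V → ℝ)) : Set (V → ℝ) :=
  {x | ∃ Y ∈ lsLift P, Y.mulVec (Pi.single none 1) = fun o => o.elim 1 x}

/-- The fractional stable set polytope. -/
def FRAC {V : Type*} (G : SimpleGraph V) : Set (V → ℝ) :=
  {x | (∀ v, 0 ≤ x v ∧ x v ≤ 1) ∧ ∀ u v, G.Adj u v → x u + x v ≤ 1}

/-- The stable set polytope: convex hull of incidence vectors of stable sets. -/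
def STAB {V : Type*} (G : SimpleGraph V) : Set (V → ℝ) :=
  convexHull ℝ {x | ∃ S : Set V, (∀ u ∈ S, ∀ v ∈ S, ¬ G.Adj u v) ∧
    x = S.indicator fun _ => (1 : ℝ)}

/-- The graph `H_k`, on vertex set `Fin k × Fin 3` (vertex `i_p` is `(i, p)`). -/
def Hgraph (k : ℕ) : SimpleGraph (Fin k × Fin 3) :=
  SimpleGraph.fromRel (fun a b =>
    (a.1 = b.1 ∧ ((a.2 = 0 ∧ b.2 = 1) ∨ (a.2 = 1 ∧ b.2 = 2))) ∨
    (a.1 ≠ b.1 ∧ a.2 = 0 ∧ b.2 = 2))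

/-- The vector `w_k(a,b)`: entry `a` on `[k]₀ ∪ [k]₂` and `b` on `[k]₁`. -/
def wVec (k : ℕ) (a b : ℝ) : Fin k × Fin 3 → ℝ := fun v => if v.2 = 1 then b else a

/-! Each automorphism `σ` of `G` maps `FRAC G`, and hence every `LS₊`-iterate of it, into itself
via `x ↦ x ∘ σ`, because `LS₊` commutes with relabelling of the coordinates (reindex the lifting
matrix). These iterates are convex, so they contain the average of `x ∘ σ` over `σ ∈ S`. By the
balancing conditions, every `σ ∈ S` maps `v ∈ A ℓ` back into `A ℓ`, and it hits each vertex of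
`A ℓ` equally often, so the average at `v` is the mean of `x` over `A ℓ`. -/

open Matrix Set

section Convexity

variable {V : Type*}

lemma convex_lsCone {P : Set (V → ℝ)} (hP : Convex ℝ P) : Convex ℝ (lsCone P) := by
  rintro _ ⟨l₁, x₁, hl₁, hx₁, rfl⟩ _ ⟨l₂, x₂, hl₂, hx₂, rfl⟩ a b ha hb hab
  have h₁ : 0 ≤ a * l₁ := mul_nonneg ha hl₁
  have h₂ : 0 ≤ b * l₂ := mul_nonneg hb hl₂
  rcases (add_nonneg h₁ h₂).eq_or_lt with h0 | h0
  · have h₁' : a * l₁ = 0 := by linarith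
    have h₂' : b * l₂ = 0 := by linarith
    refine ⟨0, x₁, le_rfl, hx₁, funext fun o => ?_⟩
    cases o <;> simp [← mul_assoc, h₁', h₂']
  · set l := a * l₁ + b * l₂
    have hmix : (a * l₁ / l) • x₁ + (b * l₂ / l) • x₂ ∈ P :=
      hP hx₁ hx₂ (by positivity) (by positivity) (by rw [← add_div, div_self h0.ne'])
    refine ⟨l, _, h0.le, hmix, funext fun o => ?_⟩
    cases o
    · simp [l]
    · simp
      field_simp

lemma convex_lsLift [Fintype V] [DecidableEq V] {P : Set (V → ℝ)} (hP : Convex ℝ P) :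
    Convex ℝ (lsLift P) := by
  rintro Y₁ ⟨hpsd₁, hdiag₁, hcol₁⟩ Y₂ ⟨hpsd₂, hdiag₂, hcol₂⟩ a b ha hb hab
  have hmulVec : ∀ f, (a • Y₁ + b • Y₂) *ᵥ f = a • (Y₁ *ᵥ f) + b • (Y₂ *ᵥ f) := fun f => by
    rw [add_mulVec, smul_mulVec, smul_mulVec]
  refine ⟨(hpsd₁.smul ha).add (hpsd₂.smul hb), ?_, fun v => ⟨?_, ?_⟩⟩
  · rw [hmulVec, hdiag₁, hdiag₂]
    rfl
  · rw [hmulVec]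
    exact convex_lsCone hP (hcol₁ v).1 (hcol₂ v).1 ha hb hab
  · rw [hmulVec]
    exact convex_lsCone hP (hcol₁ v).2 (hcol₂ v).2 ha hb hab

lemma convex_lsPlus [Fintype V] [DecidableEq V] {P : Set (V → ℝ)} (hP : Convex ℝ P) :
    Convex ℝ (lsPlus P) := by
  rintro x₁ ⟨Y₁, hY₁, he₁⟩ x₂ ⟨Y₂, hY₂, he₂⟩ a b ha hb hab
  refine ⟨a • Y₁ + b • Y₂, convex_lsLift hP hY₁ hY₂ ha hb hab, ?_⟩
  rw [add_mulVec, smul_mulVec, smul_mulVec, he₁, he₂]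
  funext o
  cases o <;> simp [hab]

lemma convex_iterate_lsPlus [Fintype V] [DecidableEq V] {P : Set (V → ℝ)} (hP : Convex ℝ P)
    (p : ℕ) : Convex ℝ (lsPlus^[p] P) := by
  induction p with
  | zero => exact hP
  | succ p ih => exact Function.iterate_succ_apply' lsPlus p P ▸ convex_lsPlus ih

lemma convex_FRAC (G : SimpleGraph V) : Convex ℝ (FRAC G) := by
  rintro y ⟨hy01, hyadj⟩ z ⟨hz01, hzadj⟩ a b ha hb hab
  refine ⟨fun v => ?_, fun u v huv => ?_⟩
  · exact convex_Icc (0 : ℝ) 1 (hy01 v) (hz01 v) ha hb hab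
  · have := convex_Iic (1 : ℝ) (hyadj u v huv) (hzadj u v huv) ha hb hab
    simp only [smul_eq_mul, Set.mem_Iic] at this
    simp only [Pi.add_apply, Pi.smul_apply, smul_eq_mul]
    linarith

end Convexity

section Relabelling

variable {V W : Type*} {f : W → V} {P : Set (V → ℝ)} {Q : Set (W → ℝ)}

lemma mapsTo_lsCone (h : MapsTo (· ∘ f) P Q) :
    MapsTo (· ∘ Option.map f) (lsCone P) (lsCone Q) := by
  rintro _ ⟨l, x, hl, hx, rfl⟩
  exact ⟨l, x ∘ f, hl, h hx, funext fun o => by cases o <;> rfl⟩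

variable [Fintype V] [DecidableEq V] [Fintype W] [DecidableEq W]

lemma mapsTo_lsPlus (h : MapsTo (· ∘ f) P Q) : MapsTo (· ∘ f) (lsPlus P) (lsPlus Q) := by
  rintro x ⟨Y, ⟨hpsd, hdiag, hcol⟩, hY⟩
  set Y' := Y.submatrix (Option.map f) (Option.map f)
  have hcol' : ∀ j, Y' *ᵥ Pi.single j 1 = (Y *ᵥ Pi.single (Option.map f j) 1) ∘ Option.map f :=
    fun j => by simp only [mulVec_single_one]; rfl
  refine ⟨Y', ⟨hpsd.submatrix _, ?_, fun w => ⟨?_, ?_⟩⟩, ?_⟩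
  · rw [hcol', Option.map_none, hdiag]
    rfl
  · rw [hcol']
    exact mapsTo_lsCone h (hcol (f w)).1
  · rw [mulVec_sub, hcol', hcol']
    have := mapsTo_lsCone h (hcol (f w)).2
    rwa [mulVec_sub] at this
  · rw [hcol', Option.map_none, hY]
    funext o
    cases o <;> rfl

lemma mapsTo_iterate_lsPlus (h : MapsTo (· ∘ f) P Q) (p : ℕ) :
    MapsTo (· ∘ f) (lsPlus^[p] P) (lsPlus^[p] Q) := by
  induction p with
  | zero => exact h
  | succ p ih =>
    rw [Function.iterate_succ_apply', Function.iterate_succ_apply']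
    exact mapsTo_lsPlus ih

end Relabelling

lemma mapsTo_FRAC {V W : Type*} {G : SimpleGraph V} {H : SimpleGraph W} (f : H →g G) :
    MapsTo (· ∘ ⇑f) (FRAC G) (FRAC H) :=
  fun _ ⟨h01, hadj⟩ => ⟨fun v => h01 (f v), fun _ _ huv => hadj _ _ (f.map_adj huv)⟩

lemma card_mul_sum_comp_eq_of_card_fiber_eq {ι α R : Type*} [DecidableEq α] [CommSemiring R]
    {S : Finset ι} {A : Finset α} {g : ι → α} (hg : ∀ i ∈ S, g i ∈ A) {c : ℕ}
    (hc : ∀ j ∈ A, #{i ∈ S | g i = j} = c) (x : α → R) :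
    #A * ∑ i ∈ S, x (g i) = #S * ∑ j ∈ A, x j := by
  have hsum : ∑ i ∈ S, x (g i) = c * ∑ j ∈ A, x j := by
    rw [← sum_fiberwise_of_maps_to hg, mul_sum]
    refine sum_congr rfl fun j hj => ?_
    rw [sum_congr rfl fun i hi => by rw [(mem_filter.1 hi).2], sum_const, hc j hj, nsmul_eq_mul]
  have hcard : #S = #A * c := by
    rw [card_eq_sum_card_fiberwise hg, sum_congr rfl hc, sum_const, smul_eq_mul]
  rw [hsum, hcard]
  push_cast
  ring

lemma sum_mul_ite_mem_eq_of_disjoint {ι V R : Type*} [Fintype ι] [DecidableEq V] [Semiring R]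
    {A : ι → Finset V} (hA : ∀ ℓ ℓ', ℓ ≠ ℓ' → Disjoint (A ℓ) (A ℓ')) (f : ι → R) {v : V}
    {ℓ : ι} (hv : v ∈ A ℓ) : ∑ ℓ', f ℓ' * (if v ∈ A ℓ' then 1 else 0) = f ℓ := by
  rw [Fintype.sum_eq_single ℓ fun ℓ' hne => ?_, if_pos hv, mul_one]
  rw [if_neg fun hv' => disjoint_left.1 (hA ℓ' ℓ hne) hv' hv, mul_zero]

theorem lsPlus_balancing {V : Type*} [Fintype V] [DecidableEq V] (G : SimpleGraph V)
    (L : ℕ) (A : Fin L → Finset V)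
    (hA2 : ∀ ℓ ℓ', ℓ ≠ ℓ' → Disjoint (A ℓ) (A ℓ'))
    (hA3 : ∀ v : V, ∃ ℓ, v ∈ A ℓ)
    (S : Finset (V ≃ V)) (hS : S.Nonempty)
    (hAut : ∀ σ ∈ S, ∀ i j : V, G.Adj i j ↔ G.Adj (σ i) (σ j))
    (hBal1 : ∀ σ ∈ S, ∀ ℓ, (A ℓ).image σ = A ℓ)
    (hBal2 : ∀ ℓ, ∀ i ∈ A ℓ, ∀ j ∈ A ℓ, ∀ i' ∈ A ℓ, ∀ j' ∈ A ℓ,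
        (S.filter fun σ => σ i = j).card = (S.filter fun σ => σ i' = j').card)
    (p : ℕ) (x : V → ℝ) (hx : x ∈ (lsPlus (V := V))^[p] (FRAC G)) :
    (fun v => ∑ ℓ : Fin L, ((∑ i ∈ A ℓ, x i) / ((A ℓ).card : ℝ)) *
        (if v ∈ A ℓ then 1 else 0))
      ∈ (lsPlus (V := V))^[p] (FRAC G) := by
  have hxσ : ∀ σ ∈ S, x ∘ σ ∈ lsPlus^[p] (FRAC G) := fun σ hσ =>
    mapsTo_iterate_lsPlus (mapsTo_FRAC ⟨σ, (hAut σ hσ _ _).1⟩) p hx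
  have hS₀ : (0 : ℝ) < #S := by exact_mod_cast hS.card_pos
  have hmem := (convex_iterate_lsPlus (convex_FRAC G) p).sum_mem
    (fun _ _ => inv_nonneg.2 hS₀.le) (by simp [hS₀.ne']) hxσ
  convert hmem using 1
  funext v
  obtain ⟨ℓ, hv⟩ := hA3 v
  have hσv : ∀ σ ∈ S, σ v ∈ A ℓ := fun σ hσ => hBal1 σ hσ ℓ ▸ mem_image_of_mem σ hv
  have hcount := card_mul_sum_comp_eq_of_card_fiber_eq (R := ℝ) hσv
    (fun j hj => hBal2 ℓ v hv j hj v hv v hv) x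
  have hA₀ : (0 : ℝ) < #(A ℓ) := by exact_mod_cast card_pos.2 ⟨v, hv⟩
  rw [sum_mul_ite_mem_eq_of_disjoint hA2 _ hv, Finset.sum_apply]
  simp only [Pi.smul_apply, Function.comp_apply, smul_eq_mul, ← mul_sum]
  field_simp
  linarith
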